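/- Let Σ be a 2×2 real symmetric positive definite matrix and let x be a 2×2 real symmetric positive definite matrix with det x = 1. Set Σ̄ = (det Σ)^{-1/2} Σ (so det Σ̄ = 1), and let δ = ‖log(Σ̄^{-1/2} x Σ̄^{-1/2})‖_F / √2, where Σ̄^{1/2} is the positive definite square root of Σ̄, log is the matrix logarithm of a positive definite matrix, and ‖·‖_F is the Frobenius norm. Then trace(Σ⁻¹ x) = 2 (det Σ)^{-1/2} cosh(δ). Equivalently, (2 / trace(Σ⁻¹ x)) = (det Σ)^{1/2} / cosh(δ), so that the projective Wishart density (2/trace(Σ⁻¹x))^{dn/2} at x is proportional to cosh(δ)^{-n}. -/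

import Mathlib

/-!
Write `Σ̄ = A²` with `A = Σ̄^{1/2}` and put `B = A⁻¹ x A⁻¹`. Then `B` is positive definite with
`det B = 1`, and by cyclicity of the trace `tr (Σ⁻¹ x) = (det Σ)^{-1/2} tr B`. In dimension two
the eigenvalues of `B` are therefore `eᵗ, e⁻ᵗ`, so `tr B = 2 cosh t`, while `log B` has
eigenvalues `± t` and hence Frobenius norm `√2 |t|`.
-/

open Matrix

open scoped Classical in
/-- The positive semidefinite square root of a matrix, extended to a total function
(junk value `0` when the matrix is not positive semidefinite). -/
noncomputable def matSqrt {d : ℕ} (A : Matrix (Fin d) (Fin d) ℝ) : Matrix (Fin d) (Fin d) ℝ :=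
  if hA : A.PosSemidef then
    hA.1.eigenvectorUnitary.1 * diagonal (Real.sqrt ∘ hA.1.eigenvalues) *
      (star hA.1.eigenvectorUnitary : Matrix (Fin d) (Fin d) ℝ)
  else 0

open scoped Classical in
/-- The matrix logarithm of a Hermitian matrix, obtained by applying `Real.log` to the
eigenvalues in a spectral decomposition (continuous functional calculus), extended to a
total function (junk value `0` on non-Hermitian matrices). -/
noncomputable def matLog {d : ℕ} (A : Matrix (Fin d) (Fin d) ℝ) : Matrix (Fin d) (Fin d) ℝ :=
  if hA : A.IsHermitian then hA.cfc Real.log else 0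

/-- The Frobenius norm of a real matrix: the square root of the sum of the squares of the
entries. -/
noncomputable def frobeniusNorm {d : ℕ} (M : Matrix (Fin d) (Fin d) ℝ) : ℝ :=
  Real.sqrt (∑ i, ∑ j, M i j ^ 2)

section

variable {n : Type*} [Fintype n]

lemma Matrix.IsHermitian.trace_cfc [DecidableEq n] {M : Matrix n n ℝ} (hM : M.IsHermitian)
    (f : ℝ → ℝ) : (cfc f M).trace = ∑ i, f (hM.eigenvalues i) := by
  rw [hM.cfc_eq, IsHermitian.cfc, Unitary.conjStarAlgAut_apply, trace_mul_cycle,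
    Unitary.coe_star_mul_self, one_mul, trace_diagonal]
  rfl

lemma Matrix.IsHermitian.sum_sq_eq_trace_mul_self {M : Matrix n n ℝ} (hM : M.IsHermitian) :
    ∑ i, ∑ j, M i j ^ 2 = (M * M).trace := by
  simp only [trace, diag_apply, mul_apply, sq]
  refine Finset.sum_congr rfl fun i _ => Finset.sum_congr rfl fun j _ => ?_
  rw [← hM.apply i j, star_trivial]

lemma Matrix.trace_inv_mul_self_mul [DecidableEq n] {R : Type*} [CommRing R]
    (A x : Matrix n n R) : ((A * A)⁻¹ * x).trace = (A⁻¹ * x * A⁻¹).trace := by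
  rw [Matrix.mul_inv_rev, Matrix.mul_assoc, trace_mul_comm, Matrix.mul_assoc]

lemma Matrix.det_rpow_neg_inv_card_smul [DecidableEq n] [Nonempty n] {S : Matrix n n ℝ}
    (hS : 0 < S.det) : (S.det ^ (-(1 : ℝ) / Fintype.card n) • S).det = 1 := by
  rw [det_smul, ← Real.rpow_natCast, ← Real.rpow_mul hS.le, div_mul_cancel₀ _ (by positivity),
    Real.rpow_neg_one, inv_mul_cancel₀ hS.ne']

end

section

variable {d : ℕ}

lemma frobeniusNorm_cfc {M : Matrix (Fin d) (Fin d) ℝ} (hM : M.IsHermitian) (f : ℝ → ℝ) :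
    frobeniusNorm (cfc f M) = √(∑ i, f (hM.eigenvalues i) ^ 2) := by
  have hfM : (cfc f M).IsHermitian := cfc_predicate f M
  have hf : ContinuousOn f (spectrum ℝ M) := M.finite_real_spectrum.continuousOn f
  rw [frobeniusNorm, hfM.sum_sq_eq_trace_mul_self, ← cfc_mul f f M, hM.trace_cfc]
  simp only [sq]

lemma matLog_eq_cfc {A : Matrix (Fin d) (Fin d) ℝ} (hA : A.IsHermitian) :
    matLog A = cfc Real.log A := by
  rw [matLog, dif_pos hA, hA.cfc_eq]

lemma matSqrt_eq_cfc {A : Matrix (Fin d) (Fin d) ℝ} (hA : A.PosSemidef) :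
    matSqrt A = cfc Real.sqrt A := by
  rw [matSqrt, dif_pos hA, hA.1.cfc_eq, IsHermitian.cfc, Unitary.conjStarAlgAut_apply]
  rfl

lemma matSqrt_mul_self {A : Matrix (Fin d) (Fin d) ℝ} (hA : A.PosSemidef) :
    matSqrt A * matSqrt A = A := by
  have hA' : IsSelfAdjoint A := hA.1
  rw [matSqrt_eq_cfc hA, ← cfc_mul Real.sqrt Real.sqrt A]
  conv_rhs => rw [← cfc_id' ℝ A]
  refine cfc_congr fun t ht => Real.mul_self_sqrt ?_
  rw [hA.1.spectrum_real_eq_range_eigenvalues] at ht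
  obtain ⟨i, rfl⟩ := ht
  exact hA.eigenvalues_nonneg i

lemma isHermitian_matSqrt (A : Matrix (Fin d) (Fin d) ℝ) : (matSqrt A).IsHermitian := by
  by_cases hA : A.PosSemidef
  · rw [matSqrt_eq_cfc hA]
    exact cfc_predicate _ A
  · rw [matSqrt, dif_neg hA]
    exact isHermitian_zero

end

lemma Matrix.PosDef.exists_eigenvalues_eq_exp_of_det_eq_one {B : Matrix (Fin 2) (Fin 2) ℝ}
    (hB : B.PosDef) (hdet : B.det = 1) :
    ∃ t : ℝ, hB.1.eigenvalues 0 = Real.exp t ∧ hB.1.eigenvalues 1 = Real.exp (-t) := by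
  have hprod : hB.1.eigenvalues 0 * hB.1.eigenvalues 1 = 1 := by
    simpa [hdet, Fin.prod_univ_two] using hB.1.det_eq_prod_eigenvalues.symm
  refine ⟨Real.log (hB.1.eigenvalues 0), (Real.exp_log (hB.eigenvalues_pos 0)).symm, ?_⟩
  rw [Real.exp_neg, Real.exp_log (hB.eigenvalues_pos 0)]
  exact eq_inv_of_mul_eq_one_right hprod

lemma trace_eq_two_mul_cosh_frobeniusNorm_matLog {B : Matrix (Fin 2) (Fin 2) ℝ}
    (hB : B.PosDef) (hdet : B.det = 1) :
    B.trace = 2 * Real.cosh (frobeniusNorm (matLog B) / √2) := by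
  obtain ⟨t, ht0, ht1⟩ := hB.exists_eigenvalues_eq_exp_of_det_eq_one hdet
  have htrace : B.trace = 2 * Real.cosh t := by
    simp [hB.1.trace_eq_sum_eigenvalues, Fin.sum_univ_two, ht0, ht1, Real.cosh_eq]
    ring
  have hnorm : frobeniusNorm (matLog B) / √2 = |t| := by
    rw [matLog_eq_cfc hB.1, frobeniusNorm_cfc hB.1, Fin.sum_univ_two, ht0, ht1, Real.log_exp,
      Real.log_exp, neg_sq, ← two_mul, Real.sqrt_mul zero_le_two, Real.sqrt_sq_eq_abs]
    field_simp
  rw [htrace, hnorm, Real.cosh_abs]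

/-- for a `2 × 2` real symmetric positive definite `Σ` and a determinant-one
symmetric positive definite `x`, with `Σ̄ = (det Σ)^{-1/2} Σ` and
`δ = ‖log(Σ̄^{-1/2} x Σ̄^{-1/2})‖_F / √2` the affine-invariant distance from `x` to `Σ̄`,
one has `trace (Σ⁻¹ x) = 2 (det Σ)^{-1/2} cosh δ`. -/
theorem trace_inv_mul_eq_cosh_dist (S x : Matrix (Fin 2) (Fin 2) ℝ)
    (hS : S.PosDef) (hx : x.PosDef) (hdetx : x.det = 1) :
    (S⁻¹ * x).trace
      = 2 * S.det ^ (-(1 : ℝ) / 2) *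
        Real.cosh
          (frobeniusNorm (matLog
              ((matSqrt ((S.det ^ (-(1 : ℝ) / 2)) • S))⁻¹ * x *
                (matSqrt ((S.det ^ (-(1 : ℝ) / 2)) • S))⁻¹)) / Real.sqrt 2) := by
  set c := S.det ^ (-(1 : ℝ) / 2)
  have hc : 0 < c := Real.rpow_pos_of_pos hS.det_pos _
  have hdetSbar : (c • S).det = 1 := by
    simpa using det_rpow_neg_inv_card_smul hS.det_pos
  set A := matSqrt (c • S)
  have hAA : A * A = c • S := matSqrt_mul_self (hS.smul hc).posSemidef
  have hdetB : (A⁻¹ * x * A⁻¹).det = 1 := by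
    rw [det_mul, det_mul, mul_right_comm, ← det_mul, ← Matrix.mul_inv_rev, hAA, det_nonsing_inv,
      hdetSbar, hdetx]
    simp
  have hB : (A⁻¹ * x * A⁻¹).PosDef := by
    have hpsd := hx.posSemidef.conjTranspose_mul_mul_same A⁻¹
    rw [(isHermitian_matSqrt _).inv.eq] at hpsd
    exact hpsd.posDef_iff_det_ne_zero.mpr (ne_of_eq_of_ne hdetB one_ne_zero)
  have hSinv : S⁻¹ = c • (c • S)⁻¹ := by
    have := invertibleOfNonzero hc.ne'
    rw [Matrix.inv_smul S c hS.det_pos.ne'.isUnit, smul_smul, mul_invOf_self, one_smul]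
  rw [hSinv, smul_mul_assoc, trace_smul, ← hAA, trace_inv_mul_self_mul,
    trace_eq_two_mul_cosh_frobeniusNorm_matLog hB hdetB, smul_eq_mul]
  ring
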